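/- arXiv:0706.1456 — 5 statements merged into one kernel-verified Lean document; each statement's English description precedes it below -/
import Mathlib

section
/- Compositionality of satisfaction: if C₁ and C₂ are contracts in canonical form, M₁ satisfies C₁ and M₂ satisfies C₂, then M₁ ∩ M₂ satisfies the parallel composition C₁ ∥ C₂ = ((A₁ ∩ A₂) ∪ (G₁ ∩ G₂)ᶜ, G₁ ∩ G₂). -/
theorem compositionality_of_satisfaction {Ω : Type*} (M₁ M₂ A₁ G₁ A₂ G₂ : Set Ω)
    (hc₁ : A₁ᶜ ⊆ G₁) (hc₂ : A₂ᶜ ⊆ G₂)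
    (h₁ : M₁ ∩ A₁ ⊆ G₁) (h₂ : M₂ ∩ A₂ ⊆ G₂) :
    (M₁ ∩ M₂) ∩ ((A₁ ∩ A₂) ∪ (G₁ ∩ G₂)ᶜ) ⊆ G₁ ∩ G₂ := by
  rintro x ⟨⟨hm1, hm2⟩, h | h⟩
  · exact ⟨h₁ ⟨hm1, h.1⟩, h₂ ⟨hm2, h.2⟩⟩
  · constructor
    · by_contra hg
      exact hg (h₁ ⟨hm1, by_contra fun ha => hg (hc₁ ha)⟩)
    · by_contra hg
      exact hg (h₂ ⟨hm2, by_contra fun ha => hg (hc₂ ha)⟩)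
end

section
/- If implementation M satisfies contract C = (A,G) and M does not depend on port p (i.e., membership of a run in M is unchanged by updating its value at p), then M satisfies the elimination C\p = (∀p A, ∃p G). -/
def forallPort {Port D : Type*} [DecidableEq Port] (p : Port) (A : Set (Port → D)) :
    Set (Port → D) := {σ | ∀ d, Function.update σ p d ∈ A}

def existsPort {Port D : Type*} [DecidableEq Port] (p : Port) (G : Set (Port → D)) :
    Set (Port → D) := {σ | ∃ d, Function.update σ p d ∈ G}

theorem elimination_satisfaction {Port D : Type*} [DecidableEq Port] [Nonempty D]
    (p : Port) (M A G : Set (Port → D))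
    (hsat : M ∩ A ⊆ G)
    (hindep : ∀ σ d, σ ∈ M ↔ Function.update σ p d ∈ M) :
    M ∩ forallPort p A ⊆ existsPort p G := by
  rintro σ ⟨hM, hA⟩
  obtain ⟨d⟩ := ‹Nonempty D›
  exact ⟨d, hsat ⟨(hindep σ d).mp hM, hA d⟩⟩
end

section
/- Elimination and greatest lower bound: for contracts C₁ = (A₁,G₁), C₂ = (A₂,G₂) and a port p, the elimination of p in C₁ ⊓ C₂ dominates the greatest lower bound of the eliminations: (∀p(A₁ ∪ A₂), ∃p(G₁ ∩ G₂)) dominates (∀p A₁ ∪ ∀p A₂, ∃p G₁ ∩ ∃p G₂). -/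
theorem elimination_glb {Port D : Type*} [DecidableEq Port]
    (p : Port) (A₁ G₁ A₂ G₂ : Set (Port → D)) :
    (forallPort p A₁ ∪ forallPort p A₂) ⊆ forallPort p (A₁ ∪ A₂) ∧
    existsPort p (G₁ ∩ G₂) ⊆ existsPort p G₁ ∩ existsPort p G₂ := by
  constructor
  · rintro σ (h | h) d
    · exact Or.inl (h d)
    · exact Or.inr (h d)
  · rintro σ ⟨d, h1, h2⟩
    exact ⟨⟨d, h1⟩, ⟨d, h2⟩⟩
end

section
/- Elimination and parallel composition: for contracts C₁, C₂ in canonical form and a port p, the elimination of p in C₁ ∥ C₂ dominates the parallel composition of the eliminated contracts; in particular (∀p((A₁∩A₂) ∪ (G₁∩G₂)ᶜ)) ⊇ (∀p A₁ ∩ ∀p A₂) ∪ (∃p G₁ ∩ ∃p G₂)ᶜ and ∃p(G₁∩G₂) ⊆ ∃p G₁ ∩ ∃p G₂. -/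
theorem elimination_parallel {Port D : Type*} [DecidableEq Port]
    (p : Port) (A₁ G₁ A₂ G₂ : Set (Port → D))
    (h₁ : A₁ᶜ ⊆ G₁) (h₂ : A₂ᶜ ⊆ G₂) :
    (forallPort p A₁ ∩ forallPort p A₂) ∪ (existsPort p G₁ ∩ existsPort p G₂)ᶜ ⊆
      forallPort p ((A₁ ∩ A₂) ∪ (G₁ ∩ G₂)ᶜ) ∧
    existsPort p (G₁ ∩ G₂) ⊆ existsPort p G₁ ∩ existsPort p G₂ := by
  constructor
  · rintro σ (⟨ha1, ha2⟩ | h) d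
    · exact Or.inl ⟨ha1 d, ha2 d⟩
    · refine Or.inr fun hg => h ?_
      rcases hg with ⟨hg1, hg2⟩
      exact ⟨⟨d, hg1⟩, ⟨d, hg2⟩⟩
  · rintro σ ⟨d, hg1, hg2⟩
    exact ⟨⟨d, hg1⟩, ⟨d, hg2⟩⟩
end

section
/- If contracts C₁ = (A₁,G₁) and C₂ = (A₂,G₂) in canonical form satisfy A₁ ⊇ G₁ ∩ G₂ and A₂ ⊇ G₁ ∩ G₂, then their greatest lower bound equals their parallel composition: (A₁ ∪ A₂, G₁ ∩ G₂) = ((A₁ ∩ A₂) ∪ (G₁ ∩ G₂)ᶜ, G₁ ∩ G₂); equivalently, (A₁ ∩ A₂) ∪ (G₁ ∩ G₂)ᶜ = A₁ ∪ A₂ = Ω. -/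
theorem glb_eq_parallel {Ω : Type*} (A₁ G₁ A₂ G₂ : Set Ω)
    (hc₁ : A₁ᶜ ⊆ G₁) (hc₂ : A₂ᶜ ⊆ G₂)
    (h₁ : G₁ ∩ G₂ ⊆ A₁) (h₂ : G₁ ∩ G₂ ⊆ A₂) :
    ((A₁ ∪ A₂, G₁ ∩ G₂) : Set Ω × Set Ω) = ((A₁ ∩ A₂) ∪ (G₁ ∩ G₂)ᶜ, G₁ ∩ G₂) ∧
    (A₁ ∩ A₂) ∪ (G₁ ∩ G₂)ᶜ = A₁ ∪ A₂ ∧ A₁ ∪ A₂ = Set.univ := by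
  have key : ∀ x : Ω, (x ∈ A₁ ∪ A₂ ↔ x ∈ (A₁ ∩ A₂) ∪ (G₁ ∩ G₂)ᶜ) ∧ x ∈ A₁ ∪ A₂ := by
    intro x
    have k1 := @hc₁ x; have k2 := @hc₂ x; have k3 := @h₁ x; have k4 := @h₂ x
    simp only [Set.mem_union, Set.mem_inter_iff, Set.mem_compl_iff] at *
    tauto
  have e1 : (A₁ : Set Ω) ∪ A₂ = (A₁ ∩ A₂) ∪ (G₁ ∩ G₂)ᶜ :=
    Set.ext fun x => (key x).1
  have e2 : A₁ ∪ A₂ = Set.univ :=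
    Set.eq_univ_of_forall fun x => (key x).2
  exact ⟨by rw [e1], e1.symm, e2⟩
end
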